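/- arXiv:2512.14498 — 5 statements merged into one kernel-verified Lean document; each statement's English description precedes it below -/
import Mathlib

section
/- Define σ ∘_i τ ∈ S_{n+m} for σ ∈ S_n, τ ∈ S_m, 0 ≤ i ≤ n, by the formula σ ∘_i τ = (1_i ⊞ τ ⊞ 1_{n-i}) · s_i^m(σ), where s_i^m denotes the m-fold iterated degeneracy duplicating the point i. Then for all 0 ≤ j ≤ m, (σ ∘_i τ)⁻¹(i+j) = σ⁻¹(i) + τ⁻¹(j). -/
open Equiv

namespace CSGPaper

/-- Transport of a permutation along an equality of index sets. -/
def pcast {a b : ℕ} (h : a = b) (σ : Perm (Fin a)) : Perm (Fin b) :=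
  Equiv.permCongr (finCongr h) σ

/-- Block sum of permutations: `σ` acts on the first `a` points, `τ` on the last `b`. -/
def bsum {a b : ℕ} (σ : Perm (Fin a)) (τ : Perm (Fin b)) : Perm (Fin (a + b)) :=
  Equiv.permCongr finSumFinEquiv (Equiv.sumCongr σ τ)

/-- The degeneracy `s_i` on permutations: duplicate the point `i` in the target and
`σ⁻¹ i` in the source, renumbering order-preservingly. -/
def pdegen {a : ℕ} (i : Fin a) (σ : Perm (Fin a)) : Perm (Fin (a + 1)) :=
  (finSuccEquiv' ((σ.symm i).succ)).trans
    ((Equiv.optionCongr σ).trans (finSuccEquiv' i.succ).symm)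

/-- The face `d_i` on permutations: delete the point `i` in the target and `σ⁻¹ i`
in the source, renumbering order-preservingly. -/
def pface {a : ℕ} (i : Fin (a + 1)) (σ : Perm (Fin (a + 1))) : Perm (Fin a) :=
  Equiv.removeNone ((finSuccEquiv' (σ.symm i)).symm.trans (σ.trans (finSuccEquiv' i)))

/-- The `m`-fold iterated degeneracy at `i` (replacing the point `i` by `m+1` points). -/
def pdegenIter {a : ℕ} (i : Fin a) (σ : Perm (Fin a)) : (m : ℕ) → Perm (Fin (a + m))
  | 0 => σ
  | m + 1 => pdegen (Fin.castLE (Nat.le_add_right a m) i) (pdegenIter i σ m)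

/-- `1_i ⊞ τ ⊞ 1_{n-i}` : the permutation `τ` padded by `i` fixed points on the left
and `n - i` fixed points on the right. -/
def ppad {n m : ℕ} (i : Fin (n + 1)) (τ : Perm (Fin (m + 1))) : Perm (Fin (n + m + 1)) :=
  pcast (show i.val + (m + 1) + (n - i.val) = n + m + 1 by have := i.isLt; omega)
    (bsum (bsum (1 : Perm (Fin i.val)) τ) (1 : Perm (Fin (n - i.val))))

/-- The shifted operadic composition `σ ∘ᵢ τ = (1_i ⊞ τ ⊞ 1_{n-i}) · s_i^m(σ)`. -/
def pcomp {n m : ℕ} (i : Fin (n + 1)) (σ : Perm (Fin (n + 1))) (τ : Perm (Fin (m + 1))) :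
    Perm (Fin (n + m + 1)) :=
  ppad i τ * pcast (show n + 1 + m = n + m + 1 by omega) (pdegenIter i σ m)

lemma pcast_symm_val {a b : ℕ} (h : a = b) (σ : Perm (Fin a)) (x : Fin b) :
    ((pcast h σ).symm x).val = (σ.symm ⟨x.val, h ▸ x.isLt⟩).val := by
  subst h; rfl

lemma pdegen_symm_eq {a : ℕ} (i : Fin a) (σ : Perm (Fin a)) (y : Fin (a + 1)) :
    (pdegen i σ).symm y =
      (finSuccEquiv' ((σ.symm i).succ)).symm
        (Option.map σ.symm (finSuccEquiv' i.succ y)) := by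
  simp [pdegen, Equiv.symm_trans_apply, ← Equiv.optionCongr_symm, Equiv.optionCongr_apply]

lemma pdegenIter_symm_val {a : ℕ} (i : Fin a) (σ : Perm (Fin a)) :
    ∀ (m k : ℕ), k ≤ m → ∀ (h : i.val + k < a + m),
    ((pdegenIter i σ m).symm ⟨i.val + k, h⟩).val = (σ.symm i).val + k := by
  intro m
  induction m with
  | zero =>
    intro k hk h
    obtain rfl : k = 0 := Nat.le_zero.mp hk
    have : (⟨i.val + 0, h⟩ : Fin a) = i := Fin.ext (by simp)
    rw [pdegenIter, this]
    omega
  | succ m ih =>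
    intro k hk h
    set i' : Fin (a + m) := Fin.castLE (Nat.le_add_right a m) i with hi'
    have hiv : i'.val = i.val := rfl
    set σ' := pdegenIter i σ m with hσ'
    have hs' : (σ'.symm i').val = (σ.symm i).val := by
      have : i' = ⟨i.val + 0, by omega⟩ := Fin.ext (Nat.add_zero _).symm
      rw [this, ih 0 (Nat.zero_le _), Nat.add_zero]
    rw [pdegenIter]
    show ((pdegen i' σ').symm (⟨i.val + k, h⟩ : Fin (a + m + 1))).val
        = (σ.symm i).val + k
    rw [pdegen_symm_eq]
    rcases Nat.lt_or_ge k 1 with h1 | h1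
    · obtain rfl : k = 0 := by omega
      have e1 : (⟨i.val + 0, h⟩ : Fin (a + m + 1)) = Fin.castSucc i' := Fin.ext rfl
      rw [e1, finSuccEquiv'_below (by simp [Fin.lt_def])]
      rw [Option.map_some, finSuccEquiv'_symm_some_below (by simp [Fin.lt_def])]
      simpa using hs'
    rcases Nat.lt_or_ge k 2 with h2 | h2
    · obtain rfl : k = 1 := by omega
      have e1 : (⟨i.val + 1, h⟩ : Fin (a + m + 1)) = i'.succ := Fin.ext rfl
      rw [e1, finSuccEquiv'_at, Option.map_none, finSuccEquiv'_symm_none]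
      simp [hs']
    · have e1 : (⟨i.val + k, h⟩ : Fin (a + m + 1))
          = Fin.succ (⟨i.val + (k-1), by omega⟩ : Fin (a + m)) :=
        Fin.ext (by simp; omega)
      rw [e1, finSuccEquiv'_above (by simp [Fin.le_def, hiv]; omega)]
      rw [Option.map_some]
      have hv : (σ'.symm ⟨i.val + (k-1), by omega⟩).val = (σ.symm i).val + (k-1) :=
        ih (k-1) (by omega) _
      rw [finSuccEquiv'_symm_some_above (by simp [Fin.le_def, hv]; omega)]
      simp [Fin.val_succ, hv]; omega

lemma bsum_symm_eq {a b : ℕ} (σ : Perm (Fin a)) (τ : Perm (Fin b)) (x : Fin (a + b)) :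
    (bsum σ τ).symm x
      = finSumFinEquiv ((Equiv.sumCongr σ.symm τ.symm) (finSumFinEquiv.symm x)) := by
  simp [bsum, Equiv.permCongr, Equiv.equivCongr]

lemma ppad_symm_val {n m : ℕ} (i : Fin (n + 1)) (τ : Perm (Fin (m + 1))) (j : Fin (m + 1))
    (h : i.val + j.val < n + m + 1) :
    ((ppad i τ).symm ⟨i.val + j.val, h⟩).val = i.val + (τ.symm j).val := by
  rw [ppad, pcast_symm_val, bsum_symm_eq]
  have e1 : (⟨i.val + j.val, by omega⟩ : Fin (i.val + (m + 1) + (n - i.val)))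
      = Fin.castAdd (n - i.val) (Fin.natAdd i.val j) := Fin.ext rfl
  rw [e1, finSumFinEquiv_symm_apply_castAdd]
  simp only [Equiv.sumCongr_apply, Sum.map_inl, bsum_symm_eq,
    finSumFinEquiv_symm_apply_natAdd, Sum.map_inr]
  simp

/-- `(σ ∘ᵢ τ)⁻¹ (i + j) = σ⁻¹(i) + τ⁻¹(j)`. -/
theorem pcomp_symm_apply {n m : ℕ} (i : Fin (n + 1)) (j : Fin (m + 1))
    (σ : Perm (Fin (n + 1))) (τ : Perm (Fin (m + 1))) :
    ((pcomp i σ τ).symm ⟨i.val + j.val, by have := i.isLt; have := j.isLt; omega⟩).val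
      = (σ.symm i).val + (τ.symm j).val := by
  have hmul : ∀ (f g : Perm (Fin (n + m + 1))) (x : Fin (n + m + 1)),
      (f * g).symm x = g.symm (f.symm x) := fun _ _ _ => rfl
  rw [pcomp, hmul]
  have hy : (ppad i τ).symm ⟨i.val + j.val, by have := i.isLt; have := j.isLt; omega⟩
      = ⟨i.val + (τ.symm j).val,
          by have := i.isLt; have := (τ.symm j).isLt; omega⟩ :=
    Fin.ext (ppad_symm_val i τ j _)
  rw [hy, pcast_symm_val]
  exact pdegenIter_symm_val i σ m (τ.symm j).val
    (Nat.lt_succ_iff.mp (τ.symm j).isLt) _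

end CSGPaper
end

section
/- The shifted operadic composition on symmetric groups is compatible with face maps: for λ ∈ S_l, μ ∈ S_m, 0 ≤ i ≤ l and 0 ≤ j ≤ m, one has d_{i+j}(λ ∘_i μ) = λ ∘_i d_j(μ). -/
open Equiv

namespace CSGPaper

lemma succAbove_pface {a : ℕ} (i : Fin (a+1)) (σ : Perm (Fin (a+1))) (x : Fin a) :
    i.succAbove (pface i σ x) = σ ((σ.symm i).succAbove x) := by
  have hex : ∃ y, ((finSuccEquiv' (σ.symm i)).symm.trans (σ.trans (finSuccEquiv' i))) (some x) = some y := by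
    simp only [Equiv.trans_apply, finSuccEquiv'_symm_some]
    have h1 : σ ((σ.symm i).succAbove x) ≠ i := by
      intro h
      have := congrArg σ.symm h
      simp at this
    rcases Fin.exists_succAbove_eq h1 with ⟨y, hy⟩
    exact ⟨y, by rw [← hy, finSuccEquiv'_succAbove]⟩
  have h := Equiv.removeNone_some _ hex
  simp only [Equiv.trans_apply, finSuccEquiv'_symm_some] at h
  have := congrArg (finSuccEquiv' i).symm h
  simp only [Equiv.symm_apply_apply, finSuccEquiv'_symm_some] at this
  exact this.symm ▸ rfl

lemma pface_eq_of {a : ℕ} (i : Fin (a+1)) (σ : Perm (Fin (a+1))) (τ : Perm (Fin a))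
    (h : ∀ x, i.succAbove (τ x) = σ ((σ.symm i).succAbove x)) : pface i σ = τ := by
  ext x
  have := (succAbove_pface i σ x).trans (h x).symm
  exact congrArg Fin.val (Fin.succAbove_right_injective this)

lemma succAbove_val {n : ℕ} (c : Fin (n+1)) (y : Fin n) :
    (c.succAbove y).val = if y.val < c.val then y.val else y.val + 1 := by
  rw [Fin.succAbove]
  split
  · rw [if_pos (by simpa [Fin.lt_def] using ‹_›)]; rfl
  · rw [if_neg (by simp only [Fin.lt_def, Fin.coe_castSucc, not_lt] at *; omega)]; rfl



lemma pface_mul {a : ℕ} (i : Fin (a+1)) (σ τ : Perm (Fin (a+1))) :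
    pface i (σ * τ) = pface i σ * pface (σ.symm i) τ := by
  apply pface_eq_of
  intro x
  simp only [Perm.mul_apply]
  rw [succAbove_pface i σ, succAbove_pface (σ.symm i) τ]
  rfl

lemma bsum_left {a b : ℕ} (σ : Perm (Fin a)) (τ : Perm (Fin b)) (x : Fin (a+b)) (y : Fin a)
    (h : x.val = y.val) : (bsum σ τ x).val = (σ y).val := by
  have hx : x = Fin.castAdd b y := Fin.ext h
  subst hx
  simp [bsum, finSumFinEquiv_symm_apply_castAdd]

lemma bsum_right {a b : ℕ} (σ : Perm (Fin a)) (τ : Perm (Fin b)) (x : Fin (a+b)) (y : Fin b)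
    (h : x.val = a + y.val) : (bsum σ τ x).val = a + (τ y).val := by
  have hx : x = Fin.natAdd a y := Fin.ext h
  subst hx
  simp [bsum, finSumFinEquiv_symm_apply_natAdd]

lemma pcast_val {a b : ℕ} (h : a = b) (σ : Perm (Fin a)) (x : Fin b) (y : Fin a)
    (hy : x.val = y.val) : (pcast h σ x).val = (σ y).val := by
  have hxy : (finCongr h).symm x = y := Fin.ext hy
  rw [pcast, Equiv.permCongr_apply, hxy]
  simp

lemma ppad_low {n m : ℕ} (i : Fin (n+1)) (τ : Perm (Fin (m+1))) (x : Fin (n+m+1))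
    (hx : x.val < i.val) : (ppad i τ x).val = x.val := by
  have hb : i.val ≤ n := by omega
  rw [ppad, pcast_val (a := i.val + (m+1) + (n - i.val)) _ _ x ⟨x.val, by omega⟩ rfl,
    bsum_left _ _ _ ⟨x.val, by omega⟩ (by rfl), bsum_left _ _ _ ⟨x.val, hx⟩ (by rfl)]
  rfl

lemma ppad_mid {n m : ℕ} (i : Fin (n+1)) (τ : Perm (Fin (m+1))) (x : Fin (n+m+1))
    (y : Fin (m+1)) (h : x.val = i.val + y.val) : (ppad i τ x).val = i.val + (τ y).val := by
  have hb : i.val ≤ n := by omega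
  rw [ppad, pcast_val (a := i.val + (m+1) + (n - i.val)) _ _ x ⟨x.val, by omega⟩ rfl,
    bsum_left _ _ _ ⟨x.val, by omega⟩ (by rfl), bsum_right _ _ _ y (by simpa using h)]

lemma ppad_high {n m : ℕ} (i : Fin (n+1)) (τ : Perm (Fin (m+1))) (x : Fin (n+m+1))
    (hx : i.val + (m+1) ≤ x.val) : (ppad i τ x).val = x.val := by
  have hb : i.val ≤ n := by omega
  have h2 := x.isLt
  rw [ppad, pcast_val (a := i.val + (m+1) + (n - i.val)) _ _ x ⟨x.val, by omega⟩ rfl,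
    bsum_right _ _ _ ⟨x.val - (i.val + (m+1)), by omega⟩ (by simp; omega)]
  simp; omega


lemma pdegen_succAbove {a : ℕ} (i : Fin a) (σ : Perm (Fin a)) (y : Fin a) :
    pdegen i σ (((σ.symm i).succ).succAbove y) = (i.succ).succAbove (σ y) := by
  simp [pdegen, finSuccEquiv'_succAbove, finSuccEquiv'_symm_some]

lemma pdegen_new {a : ℕ} (i : Fin a) (σ : Perm (Fin a)) :
    pdegen i σ ((σ.symm i).succ) = i.succ := by
  simp [pdegen, finSuccEquiv'_at, finSuccEquiv'_symm_none]

variable {l : ℕ} (i : Fin (l+1)) (lam : Perm (Fin (l+1)))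

lemma pdegenIter_val (m : ℕ) :
    (∀ (x : Fin (l+1+m)) (x' : Fin (l+1)), x.val = x'.val → x'.val < (lam.symm i).val →
        (pdegenIter i lam m x).val
          = (if (lam x').val < i.val then (lam x').val else (lam x').val + m))
  ∧ (∀ (x : Fin (l+1+m)), (lam.symm i).val ≤ x.val → x.val ≤ (lam.symm i).val + m →
        (pdegenIter i lam m x).val = i.val + (x.val - (lam.symm i).val))
  ∧ (∀ (x : Fin (l+1+m)) (x' : Fin (l+1)), x.val = x'.val + m → (lam.symm i).val < x'.val →
        (pdegenIter i lam m x).val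
          = (if (lam x').val < i.val then (lam x').val else (lam x').val + m)) := by
  induction m with
  | zero =>
      refine ⟨?_, ?_, ?_⟩
      · intro x x' h hx
        have hL : (lam x').val ≠ i.val := by
          intro hc
          have : x' = lam.symm i := by
            rw [← Fin.ext hc]; simp
          omega
        have hxx : lam x = lam x' := congrArg lam (Fin.ext h)
        simp only [pdegenIter]
        rw [congrArg Fin.val hxx]
        split <;> omega
      · intro x h1 h2
        have hx : x = lam.symm i := Fin.ext (by omega)
        have hli : lam x = i := by rw [hx]; simp
        simp only [pdegenIter]
        rw [congrArg Fin.val hli]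
        omega
      · intro x x' h hx
        have hL : (lam x').val ≠ i.val := by
          intro hc
          have : x' = lam.symm i := by
            rw [← Fin.ext hc]; simp
          omega
        have hxx : lam x = lam x' := congrArg lam (Fin.ext (by omega))
        simp only [pdegenIter]
        rw [congrArg Fin.val hxx]
        split <;> omega
  | succ m IH =>
      obtain ⟨IH1, IH2, IH3⟩ := IH
      have hAlt : (lam.symm i).val < l + 1 := (lam.symm i).isLt
      have hsymm : (pdegenIter i lam m).symm (Fin.castLE (Nat.le_add_right (l+1) m) i)
          = ⟨(lam.symm i).val, by omega⟩ := by
        rw [Equiv.symm_apply_eq]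
        apply Fin.ext
        rw [IH2 ⟨(lam.symm i).val, by omega⟩ (le_refl _) (by simp)]
        simp
      have hnew : ∀ (c : Fin (l+1+(m+1))), c.val = (lam.symm i).val + 1 →
          ((pdegenIter i lam (m+1)) c).val = i.val + 1 := by
        intro c hc
        have hcc : c = ⟨(lam.symm i).val + 1, by omega⟩ := Fin.ext hc
        rw [hcc]
        have h1 := pdegen_new (Fin.castLE (Nat.le_add_right (l+1) m) i) (pdegenIter i lam m)
        rw [hsymm] at h1
        exact congrArg Fin.val h1
      have hstep : ∀ (c : Fin (l+1+(m+1))), c.val = (lam.symm i).val + 1 → ∀ (y : Fin (l+1+m)),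
          (pdegenIter i lam (m+1) (c.succAbove y)).val
            = if (pdegenIter i lam m y).val < i.val + 1 then (pdegenIter i lam m y).val
              else (pdegenIter i lam m y).val + 1 := by
        intro c hc y
        have hcc : c = ⟨(lam.symm i).val + 1, by omega⟩ := Fin.ext hc
        rw [hcc]
        have h1 := pdegen_succAbove (Fin.castLE (Nat.le_add_right (l+1) m) i)
          (pdegenIter i lam m) y
        rw [hsymm] at h1
        have h1v := congrArg Fin.val h1
        rw [succAbove_val] at h1v
        exact h1v
      obtain ⟨c, hcA⟩ : ∃ c : Fin (l+1+(m+1)), c.val = (lam.symm i).val + 1 := ⟨⟨(lam.symm i).val + 1, by omega⟩, rfl⟩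
      refine ⟨?_, ?_, ?_⟩
      · intro x x' h hx
        have hL : (lam x').val ≠ i.val := by
          intro hc
          have : x' = lam.symm i := by
            rw [← Fin.ext hc]; simp
          omega
        have hLlt := (lam x').isLt
        obtain ⟨y, hy⟩ : ∃ y : Fin (l+1+m), y.val = x.val := ⟨⟨x.val, by omega⟩, rfl⟩
        have hxy : c.succAbove y = x := by
          apply Fin.ext
          rw [succAbove_val]
          split <;> omega
        rw [← hxy, hstep c hcA y, IH1 y x' (by omega) (by omega)]
        split_ifs <;> omega
      · intro x h1 h2
        rcases Nat.lt_trichotomy x.val ((lam.symm i).val + 1) with hc | hc | hc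
        · obtain ⟨y, hy⟩ : ∃ y : Fin (l+1+m), y.val = x.val := ⟨⟨x.val, by omega⟩, rfl⟩
          have hxy : c.succAbove y = x := by
            apply Fin.ext
            rw [succAbove_val]
            split <;> omega
          rw [← hxy, hstep c hcA y, IH2 y (by omega) (by omega), succAbove_val]
          split_ifs <;> omega
        · rw [hnew x (by omega)]
          omega
        · obtain ⟨y, hy⟩ : ∃ y : Fin (l+1+m), y.val = x.val - 1 := ⟨⟨x.val - 1, by omega⟩, rfl⟩
          have hxy : c.succAbove y = x := by
            apply Fin.ext
            rw [succAbove_val]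
            split <;> omega
          rw [← hxy, hstep c hcA y, IH2 y (by omega) (by omega), succAbove_val]
          split_ifs <;> omega
      · intro x x' h hx
        have hL : (lam x').val ≠ i.val := by
          intro hc
          have : x' = lam.symm i := by
            rw [← Fin.ext hc]; simp
          omega
        have hLlt := (lam x').isLt
        obtain ⟨y, hy⟩ : ∃ y : Fin (l+1+m), y.val = x.val - 1 := ⟨⟨x.val - 1, by omega⟩, rfl⟩
        have hxy : c.succAbove y = x := by
          apply Fin.ext
          rw [succAbove_val]
          split <;> omega
        rw [← hxy, hstep c hcA y, IH3 y x' (by omega) (by omega)]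
        split_ifs <;> omega

lemma pface_pdegenIter (m : ℕ) (t : Fin (l+1+(m+1))) (ht1 : i.val ≤ t.val)
    (ht2 : t.val ≤ i.val + (m+1)) :
    pface t (pdegenIter i lam (m+1)) = pdegenIter i lam m := by
  have hAlt : (lam.symm i).val < l + 1 := (lam.symm i).isLt
  obtain ⟨c, hc⟩ : ∃ c : Fin (l+1+(m+1)), c.val = (lam.symm i).val + (t.val - i.val) :=
    ⟨⟨_, by omega⟩, rfl⟩
  have hsymm : (pdegenIter i lam (m+1)).symm t = c := by
    rw [Equiv.symm_apply_eq]
    apply Fin.ext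
    rw [(pdegenIter_val i lam (m+1)).2.1 c (by omega) (by omega)]
    omega
  apply pface_eq_of
  intro x
  have hxlt : x.val < l + 1 + m := x.isLt
  show t.succAbove ((pdegenIter i lam m) x)
      = (pdegenIter i lam (m+1)) (((pdegenIter i lam (m+1)).symm t).succAbove x)
  rw [hsymm]
  apply Fin.ext
  rw [succAbove_val]
  rcases Nat.lt_or_ge x.val (lam.symm i).val with hxa | hxa
  · -- low
    obtain ⟨x', hx'⟩ : ∃ x' : Fin (l+1), x'.val = x.val := ⟨⟨x.val, by omega⟩, rfl⟩
    have hL : (lam x').val ≠ i.val := by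
      intro hcc
      have : x' = lam.symm i := by
        rw [← Fin.ext hcc]; simp
      omega
    have hLlt := (lam x').isLt
    have hu : (c.succAbove x).val = x.val := by
      rw [succAbove_val, if_pos (by omega)]
    rw [(pdegenIter_val i lam (m+1)).1 (c.succAbove x) x' (by omega) (by omega),
      (pdegenIter_val i lam m).1 x x' (by omega) (by omega)]
    split_ifs <;> omega
  · rcases Nat.lt_or_ge ((lam.symm i).val + m) x.val with hxb | hxb
    · -- high
      obtain ⟨x', hx'⟩ : ∃ x' : Fin (l+1), x'.val = x.val - m := ⟨⟨x.val - m, by omega⟩, rfl⟩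
      have hL : (lam x').val ≠ i.val := by
        intro hcc
        have : x' = lam.symm i := by
          rw [← Fin.ext hcc]; simp
        omega
      have hLlt := (lam x').isLt
      have hu : (c.succAbove x).val = x.val + 1 := by
        rw [succAbove_val, if_neg (by omega)]
      rw [(pdegenIter_val i lam (m+1)).2.2 (c.succAbove x) x' (by omega) (by omega),
        (pdegenIter_val i lam m).2.2 x x' (by omega) (by omega)]
      split_ifs <;> omega
    · -- middle
      rcases Nat.lt_or_ge x.val c.val with hxc | hxc
      · have hu : (c.succAbove x).val = x.val := by
          rw [succAbove_val, if_pos hxc]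
        rw [(pdegenIter_val i lam (m+1)).2.1 (c.succAbove x) (by omega) (by omega),
          (pdegenIter_val i lam m).2.1 x (by omega) (by omega)]
        split_ifs <;> omega
      · have hu : (c.succAbove x).val = x.val + 1 := by
          rw [succAbove_val, if_neg (by omega)]
        rw [(pdegenIter_val i lam (m+1)).2.1 (c.succAbove x) (by omega) (by omega),
          (pdegenIter_val i lam m).2.1 x (by omega) (by omega)]
        split_ifs <;> omega

lemma pcast_id {a : ℕ} (h : a = a) (σ : Perm (Fin a)) : pcast h σ = σ :=
  Equiv.ext fun x => Fin.ext (pcast_val h σ x x rfl)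

lemma pface_ppad {l m : ℕ} (i : Fin (l+1)) (j : Fin (m+2)) (mu : Perm (Fin (m+2)))
    (t : Fin (l + (m+1) + 1)) (ht : t.val = i.val + j.val) :
    pface t (ppad i mu) = ppad i (pface j mu) := by
  have hil : i.val < l + 1 := i.isLt
  have hjl : j.val < m + 2 := j.isLt
  have hMj : (mu.symm j).val < m + 2 := (mu.symm j).isLt
  obtain ⟨c, hcv⟩ : ∃ c : Fin (l+(m+1)+1), c.val = i.val + (mu.symm j).val :=
    ⟨⟨_, by omega⟩, rfl⟩
  have hsymm : (ppad i mu).symm t = c := by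
    rw [Equiv.symm_apply_eq]
    apply Fin.ext
    rw [ppad_mid i mu c (mu.symm j) (by omega), Equiv.apply_symm_apply]
    omega
  apply pface_eq_of
  intro x
  have hxlt : x.val < l + (m+1) := x.isLt
  show t.succAbove ((ppad i (pface j mu)) x) = (ppad i mu) (((ppad i mu).symm t).succAbove x)
  rw [hsymm]
  apply Fin.ext
  rw [succAbove_val]
  rcases Nat.lt_or_ge x.val i.val with hx | hx
  · rw [ppad_low i (pface j mu) x hx]
    have hu : (c.succAbove x).val = x.val := by rw [succAbove_val, if_pos (by omega)]
    rw [ppad_low i mu (c.succAbove x) (by omega)]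
    split_ifs <;> omega
  · rcases Nat.lt_or_ge x.val (i.val + (m+1)) with hx2 | hx2
    · obtain ⟨y, hyv⟩ : ∃ y : Fin (m+1), y.val = x.val - i.val := ⟨⟨x.val - i.val, by omega⟩, rfl⟩
      rw [ppad_mid i (pface j mu) x y (by omega)]
      have hq := ((pface j mu) y).isLt
      have hchar := congrArg Fin.val (succAbove_pface j mu y)
      rw [succAbove_val] at hchar
      have hMne : (mu ((mu.symm j).succAbove y)).val ≠ j.val := by
        intro hcc
        have h2 : mu ((mu.symm j).succAbove y) = j := Fin.ext hcc
        have h3 := congrArg mu.symm h2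
        simp only [Equiv.symm_apply_apply] at h3
        exact Fin.succAbove_ne (mu.symm j) y h3
      rcases Nat.lt_or_ge x.val c.val with hxc | hxc
      · have hu : (c.succAbove x).val = x.val := by rw [succAbove_val, if_pos hxc]
        have hy2 : ((mu.symm j).succAbove y).val = y.val := by
          rw [succAbove_val, if_pos (by omega)]
        rw [ppad_mid i mu (c.succAbove x) ((mu.symm j).succAbove y) (by omega)]
        rcases Nat.lt_or_ge ((pface j mu) y).val j.val with h' | h'
        · rw [if_pos h'] at hchar
          split_ifs <;> omega
        · rw [if_neg (by omega)] at hchar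
          split_ifs <;> omega
      · have hu : (c.succAbove x).val = x.val + 1 := by rw [succAbove_val, if_neg (by omega)]
        have hy2 : ((mu.symm j).succAbove y).val = y.val + 1 := by
          rw [succAbove_val, if_neg (by omega)]
        rw [ppad_mid i mu (c.succAbove x) ((mu.symm j).succAbove y) (by omega)]
        rcases Nat.lt_or_ge ((pface j mu) y).val j.val with h' | h'
        · rw [if_pos h'] at hchar
          split_ifs <;> omega
        · rw [if_neg (by omega)] at hchar
          split_ifs <;> omega
    · rw [ppad_high i (pface j mu) x (by omega)]
      have hu : (c.succAbove x).val = x.val + 1 := by rw [succAbove_val, if_neg (by omega)]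
      rw [ppad_high i mu (c.succAbove x) (by omega)]
      split_ifs <;> omega

lemma pcast_symm {a b : ℕ} (h : a = b) (σ : Perm (Fin a)) :
    (pcast h σ).symm = pcast h σ.symm := rfl

lemma pface_pcast {a b : ℕ} (h : a + 1 = b + 1) (hab : a = b) (t : Fin (b+1)) (t' : Fin (a+1))
    (htt : t'.val = t.val) (σ : Perm (Fin (a+1))) :
    pface t (pcast h σ) = pcast hab (pface t' σ) := by
  apply pface_eq_of
  intro x
  obtain ⟨x', hx'⟩ : ∃ x' : Fin a, x'.val = x.val := ⟨⟨x.val, by omega⟩, rfl⟩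
  apply Fin.ext
  have hsv : ((pcast h σ).symm t).val = (σ.symm t').val := by
    rw [pcast_symm, pcast_val h σ.symm t t' htt.symm]
  rw [succAbove_val, pcast_val hab _ x x' hx'.symm,
      pcast_val h σ _ ((σ.symm t').succAbove x')
        (by simp only [succAbove_val, hsv, hx'])]
  have hchar := congrArg Fin.val (succAbove_pface t' σ x')
  rw [succAbove_val] at hchar
  rcases Nat.lt_or_ge ((pface t' σ) x').val t'.val with h' | h'
  · rw [if_pos h'] at hchar
    split_ifs <;> omega
  · rw [if_neg (by omega)] at hchar
    split_ifs <;> omega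


/-- compatibility of composition with faces,
`d_{i+j}(λ ∘ᵢ μ) = λ ∘ᵢ d_j(μ)`. -/
theorem pface_pcomp {l m : ℕ} (i : Fin (l + 1)) (j : Fin (m + 2))
    (lam : Perm (Fin (l + 1))) (mu : Perm (Fin (m + 2))) :
    pface (⟨i.val + j.val, by have := i.isLt; have := j.isLt; omega⟩ : Fin (l + (m + 1) + 1))
        (pcomp i lam mu)
      = pcomp i lam (pface j mu) := by
  have hil : i.val < l + 1 := i.isLt
  have hjl : j.val < m + 2 := j.isLt
  have hMj : (mu.symm j).val < m + 2 := (mu.symm j).isLt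
  rw [pcomp, pcomp, pface_mul]
  obtain ⟨c, hcv⟩ : ∃ c : Fin (l+(m+1)+1), c.val = i.val + (mu.symm j).val :=
    ⟨⟨_, by omega⟩, rfl⟩
  have hsymm : (ppad i mu).symm ⟨i.val + j.val, by omega⟩ = c := by
    rw [Equiv.symm_apply_eq]
    apply Fin.ext
    rw [ppad_mid i mu c (mu.symm j) (by omega), Equiv.apply_symm_apply]
  rw [hsymm, pface_ppad i j mu _ rfl]
  congr 1
  rw [pface_pcast (show (l+1+m)+1 = (l+(m+1))+1 by omega) (show l+1+m = l+(m+1) by omega)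
        c ⟨c.val, by omega⟩ rfl (pdegenIter i lam (m+1)),
      pface_pdegenIter i lam m ⟨c.val, by omega⟩
        (by show i.val ≤ c.val; omega) (by show c.val ≤ i.val + (m+1); omega)]

end CSGPaper
end

section
/- In any operadic crossed simplicial group G_*, the operadic composition is multiplicative in the following sense: for α, α' ∈ G_n and β, β' ∈ G_m and 0 ≤ i ≤ n, (α ∘_i β) · (α' ∘_{α⁻¹(i)} β') = (αα') ∘_i (ββ'), where α ∘_i β = (1_i ⊞ β ⊞ 1_{n-i}) · s_i^m(α). -/
open Equiv

namespace CSGPaper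

/-- A crossed simplicial group (Fiedorowicz–Loday): a sequence of groups `G n`
(`G n` is the group in simplicial degree `n`, acting on the `n+1`-element set `Fin (n+1)`),
with face and degeneracy maps satisfying the twisted (crossed) multiplicativity,
the usual simplicial identities, and compatibility of the action with faces and
degeneracies. -/
structure CrossedSimplicialGroup (G : ℕ → Type) [∀ n, Group (G n)] where
  /-- the action of `G n` on the set of vertices `Fin (n+1)` -/
  act : ∀ n, G n →* Equiv.Perm (Fin (n + 1))
  /-- face maps -/
  d : ∀ n, Fin (n + 2) → G (n + 1) → G n
  /-- degeneracy maps -/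
  s : ∀ n, Fin (n + 1) → G n → G (n + 1)
  /-- crossed multiplicativity of faces: `d_i (g₁ g₂) = d_i (g₁) · d_{g₁⁻¹ i} (g₂)` -/
  d_mul : ∀ n (i : Fin (n + 2)) (g₁ g₂ : G (n + 1)),
    d n i (g₁ * g₂) = d n i g₁ * d n ((act (n + 1) g₁).symm i) g₂
  /-- crossed multiplicativity of degeneracies -/
  s_mul : ∀ n (i : Fin (n + 1)) (g₁ g₂ : G n),
    s n i (g₁ * g₂) = s n i g₁ * s n ((act n g₁).symm i) g₂
  /-- simplicial identity `d_i d_j = d_{j-1} d_i` for `i < j` -/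
  dd : ∀ n (i j : Fin (n + 2)), i ≤ j → ∀ x : G (n + 2),
    d n i (d (n + 1) j.succ x) = d n j (d (n + 1) i.castSucc x)
  /-- simplicial identity `s_i s_j = s_{j+1} s_i` for `i ≤ j` -/
  ss : ∀ n (i j : Fin (n + 1)), i ≤ j → ∀ x : G n,
    s (n + 1) i.castSucc (s n j x) = s (n + 1) j.succ (s n i x)
  /-- simplicial identity `d_i s_j = s_{j-1} d_i` for `i < j` -/
  ds_le : ∀ n (i : Fin (n + 2)) (j : Fin (n + 1)), i ≤ j.castSucc → ∀ x : G (n + 1),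
    d (n + 1) i.castSucc (s (n + 1) j.succ x) = s n j (d n i x)
  /-- simplicial identity `d_i s_i = id` -/
  ds_self₁ : ∀ n (i : Fin (n + 1)) (x : G n), d n i.castSucc (s n i x) = x
  /-- simplicial identity `d_{i+1} s_i = id` -/
  ds_self₂ : ∀ n (i : Fin (n + 1)) (x : G n), d n i.succ (s n i x) = x
  /-- simplicial identity `d_i s_j = s_j d_{i-1}` for `i > j + 1` -/
  ds_gt : ∀ n (i : Fin (n + 2)) (j : Fin (n + 1)), j.castSucc < i → ∀ x : G (n + 1),
    d (n + 1) i.succ (s (n + 1) j.castSucc x) = s n j (d n i x)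
  /-- the action is compatible with faces -/
  act_d : ∀ n (i : Fin (n + 2)) (g : G (n + 1)), act n (d n i g) = pface i (act (n + 1) g)
  /-- the action is compatible with degeneracies -/
  act_s : ∀ n (i : Fin (n + 1)) (g : G n), act (n + 1) (s n i g) = pdegen i (act n g)

/-- A symmetric, ambi contractible crossed simplicial group: the structural projection
(the action map) to the symmetric crossed simplicial group is surjective, and there are
left and right contracting simplicial homotopies `s_L`, `s_R` which are group
homomorphisms lifting those of the symmetric groups. -/
structure ContractibleCSG (G : ℕ → Type) [∀ n, Group (G n)] extends
    CrossedSimplicialGroup G where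
  act_surj : ∀ n, Function.Surjective (act n)
  /-- the left contracting homotopy (adding a fixed point on the left) -/
  sL : ∀ n, G n →* G (n + 1)
  /-- the right contracting homotopy (adding a fixed point on the right) -/
  sR : ∀ n, G n →* G (n + 1)
  act_sL : ∀ n (g : G n), act (n + 1) (sL n g)
    = pcast (show 1 + (n + 1) = n + 2 by omega) (bsum (1 : Equiv.Perm (Fin 1)) (act n g))
  act_sR : ∀ n (g : G n), act (n + 1) (sR n g) = bsum (act n g) (1 : Equiv.Perm (Fin 1))
  d_sL_zero : ∀ n (g : G n), d n 0 (sL n g) = g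
  d_sL : ∀ n (i : Fin (n + 2)) (g : G (n + 1)),
    d (n + 1) i.succ (sL (n + 1) g) = sL n (d n i g)
  s_sL : ∀ n (i : Fin (n + 1)) (g : G n),
    s (n + 1) i.succ (sL n g) = sL (n + 1) (s n i g)
  d_sR_last : ∀ n (g : G n), d n (Fin.last (n + 1)) (sR n g) = g
  d_sR : ∀ n (i : Fin (n + 2)) (g : G (n + 1)),
    d (n + 1) i.castSucc (sR (n + 1) g) = sR n (d n i g)
  s_sR : ∀ n (i : Fin (n + 1)) (g : G n),
    s (n + 1) i.castSucc (sR n g) = sR (n + 1) (s n i g)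
  sLR : ∀ n (g : G n), sL (n + 1) (sR n g) = sR (n + 1) (sL n g)

variable {G : ℕ → Type} [∀ n, Group (G n)]

/-- Transport along an equality of degrees. -/
def Gcast {a b : ℕ} (h : a = b) (g : G a) : G b := h ▸ g

/-- Iterated left contraction `s_L^k : G n → G (n + k)`. -/
def sLiter (X : ContractibleCSG G) : (k : ℕ) → ∀ {n : ℕ}, G n → G (n + k)
  | 0, _, g => g
  | k + 1, n, g => X.sL (n + k) (sLiter X k g)

/-- Iterated right contraction `s_R^k : G n → G (n + k)`. -/
def sRiter (X : ContractibleCSG G) : (k : ℕ) → ∀ {n : ℕ}, G n → G (n + k)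
  | 0, _, g => g
  | k + 1, n, g => X.sR (n + k) (sRiter X k g)

/-- The block sum `α ⊞ β = s_R^{m+1}(α) · s_L^{n+1}(β) : G n × G m → G (n+m+1)`. -/
def gbox (X : ContractibleCSG G) {n m : ℕ} (α : G n) (β : G m) : G (n + m + 1) :=
  Gcast (show n + (m + 1) = n + m + 1 by omega) (sRiter X (m + 1) α)
    * Gcast (show m + (n + 1) = n + m + 1 by omega) (sLiter X (n + 1) β)

/-- The `m`-fold iterated degeneracy `s_i^m : G n → G (n + m)` at the vertex `i`. -/
def gsIter (X : CrossedSimplicialGroup G) : (m : ℕ) → ∀ {n : ℕ}, Fin (n + 1) → G n → G (n + m)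
  | 0, _, _, g => g
  | m + 1, n, i, g => X.s (n + m) (Fin.castLE (by omega) i) (gsIter X m i g)

/-- `1_i ⊞ β ⊞ 1_{n-i} = s_L^i (s_R^{n-i} β) : G m → G (n + m)`. -/
def gpad (X : ContractibleCSG G) {n m : ℕ} (i : Fin (n + 1)) (β : G m) : G (n + m) :=
  Gcast (show m + (n - i.val) + i.val = n + m by have := i.isLt; omega)
    (sLiter X i.val (sRiter X (n - i.val) β))

/-- The shifted operadic composition `α ∘ᵢ β = (1_i ⊞ β ⊞ 1_{n-i}) · s_i^m(α)`. -/
def gcomp (X : ContractibleCSG G) {n m : ℕ} (i : Fin (n + 1)) (α : G n) (β : G m) :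
    G (n + m) :=
  gpad X i β * gsIter X.toCrossedSimplicialGroup m i α

/-- A monoidal crossed simplicial group: a symmetric ambi contractible crossed
simplicial group for which the block sum is a group homomorphism, equivalently
`s_R^{m+1}(α)` and `s_L^{n+1}(β)` always commute. -/
structure MonoidalCSG (G : ℕ → Type) [∀ n, Group (G n)] extends ContractibleCSG G where
  mon : ∀ {n m : ℕ} (α : G n) (β : G m),
    Commute (Gcast (show n + (m + 1) = n + m + 1 by omega)
        (sRiter toContractibleCSG (m + 1) α))
      (Gcast (show m + (n + 1) = n + m + 1 by omega) (sLiter toContractibleCSG (n + 1) β))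

/-- An operadic crossed simplicial group: a monoidal crossed simplicial group
satisfying `(1_i ⊞ β ⊞ 1_{n-i}) · s_i^m(α) = s_i^m(α) · (1_{α⁻¹ i} ⊞ β ⊞ 1_{n-α⁻¹ i})`. -/
structure OperadicCSG (G : ℕ → Type) [∀ n, Group (G n)] extends MonoidalCSG G where
  operadic : ∀ {n m : ℕ} (i : Fin (n + 1)) (α : G n) (β : G m),
    gpad toMonoidalCSG.toContractibleCSG i β
        * gsIter toMonoidalCSG.toContractibleCSG.toCrossedSimplicialGroup m i α
      = gsIter toMonoidalCSG.toContractibleCSG.toCrossedSimplicialGroup m i α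
          * gpad toMonoidalCSG.toContractibleCSG ((act n α).symm i) β


lemma pdegen_symm_castSucc {a : ℕ} (σ : Perm (Fin (a + 1))) (j : Fin (a + 1)) :
    (pdegen j σ).symm j.castSucc = (σ.symm j).castSucc := by
  simp only [pdegen, Equiv.symm_trans_apply, Equiv.symm_symm]
  rw [finSuccEquiv'_below (Fin.castSucc_lt_succ : j.castSucc < j.succ)]
  simp only [← Equiv.optionCongr_symm, Equiv.optionCongr_apply, Option.map_some]
  rw [finSuccEquiv'_symm_some_below (Fin.castSucc_lt_succ : (σ.symm j).castSucc < (σ.symm j).succ)]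

variable {G : ℕ → Type} [∀ n, Group (G n)]

lemma Gcast_mul {a b : ℕ} (h : a = b) (g g' : G a) :
    Gcast h (g * g') = Gcast h g * Gcast h g' := by subst h; rfl

lemma sLiter_mul (X : ContractibleCSG G) (k : ℕ) {n : ℕ} (g g' : G n) :
    sLiter X k (g * g') = sLiter X k g * sLiter X k g' := by
  induction k with
  | zero => rfl
  | succ k ih => simp [sLiter, ih, map_mul]

lemma sRiter_mul (X : ContractibleCSG G) (k : ℕ) {n : ℕ} (g g' : G n) :
    sRiter X k (g * g') = sRiter X k g * sRiter X k g' := by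
  induction k with
  | zero => rfl
  | succ k ih => simp [sRiter, ih, map_mul]

lemma gpad_mul (X : ContractibleCSG G) {n m : ℕ} (i : Fin (n + 1)) (β β' : G m) :
    gpad X i (β * β') = gpad X i β * gpad X i β' := by
  rw [gpad, sRiter_mul, sLiter_mul, Gcast_mul]; rfl

set_option maxHeartbeats 2000000 in
lemma act_gsIter_symm (X : CrossedSimplicialGroup G) (m : ℕ) {n : ℕ} (i : Fin (n + 1))
    (α : G n) :
    (X.act (n + m) (gsIter X m i α)).symm (Fin.castLE (by omega) i)
      = Fin.castLE (by omega) ((X.act n α).symm i) := by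
  induction m with
  | zero => rfl
  | succ m ih =>
    have h1 : (Fin.castLE (by omega : n + 1 ≤ n + (m + 1) + 1) i)
        = Fin.castSucc (Fin.castLE (by omega : n + 1 ≤ n + m + 1) i) := rfl
    have h2 : (Fin.castLE (by omega : n + 1 ≤ n + (m + 1) + 1) ((X.act n α).symm i))
        = Fin.castSucc (Fin.castLE (by omega : n + 1 ≤ n + m + 1) ((X.act n α).symm i)) := rfl
    simp only [gsIter]
    erw [X.act_s, h1, h2, pdegen_symm_castSucc, ih]

lemma gsIter_mul (X : CrossedSimplicialGroup G) (m : ℕ) {n : ℕ} (i : Fin (n + 1))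
    (α α' : G n) :
    gsIter X m i (α * α')
      = gsIter X m i α * gsIter X m ((X.act n α).symm i) α' := by
  induction m with
  | zero => rfl
  | succ m ih =>
    show X.s (n + m) (Fin.castLE (by omega) i) (gsIter X m i (α * α')) = _
    rw [ih, X.s_mul, act_gsIter_symm]
    rfl

/-- in an operadic crossed simplicial group the operadic composition is
multiplicative: `(α ∘ᵢ β) · (α' ∘_{α⁻¹ i} β') = (αα') ∘ᵢ (ββ')`. -/
theorem gcomp_mul (G : ℕ → Type) [∀ n, Group (G n)] (X : OperadicCSG G) {n m : ℕ}
    (i : Fin (n + 1)) (α α' : G n) (β β' : G m) :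
    gcomp X.toContractibleCSG i α β
        * gcomp X.toContractibleCSG ((X.act n α).symm i) α' β'
      = gcomp X.toContractibleCSG i (α * α') (β * β') := by
  have hop := X.operadic i α β'
  simp only [gcomp, OperadicCSG.toMonoidalCSG] at hop ⊢
  rw [gpad_mul, gsIter_mul]
  set P := gpad X.toContractibleCSG i β
  set Q := gpad X.toContractibleCSG i β'
  set A := gsIter X.toCrossedSimplicialGroup m i α
  set Q' := gpad X.toContractibleCSG ((X.act n α).symm i) β'
  set A' := gsIter X.toCrossedSimplicialGroup m ((X.act n α).symm i) α'
  calc P * A * (Q' * A') = P * (A * Q') * A' := by group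
    _ = P * (Q * A) * A' := by rw [← hop]
    _ = P * Q * (A * A') := by group

end CSGPaper
end

section
/- Let G_* be a crossed simplicial group with structural decomposition P_* ↪ G_* ↠ N_* and Γ_n = G_n ⫽ P_n the action groupoids. The maps s_i[σ, f] = [s_i(σ), (s_{σ⁻¹(i)}(f⁻¹))⁻¹] and d_i[σ, f] = [d_i(σ), (d_{σ⁻¹(i)}(f⁻¹))⁻¹] are well-defined functors of groupoids s_i : Γ_n → Γ_{n+1} and d_i : Γ_n → Γ_{n-1}. -/
open Equiv

namespace CSGPaper

/-- The structural decomposition data of a crossed simplicial group `G`: a surjective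
morphism of crossed simplicial groups `π : G → N` onto the structural quotient `N`
(one of the seven fundamental crossed simplicial groups); its kernel `P_* = ker π`
is automatically a simplicial group, since the action of `G` factors through `N`. -/
structure CSGProjection (G N : ℕ → Type) [∀ n, Group (G n)] [∀ n, Group (N n)] where
  X : CrossedSimplicialGroup G
  Y : CrossedSimplicialGroup N
  /-- the structural projection -/
  proj : ∀ n, G n →* N n
  proj_surj : ∀ n, Function.Surjective (proj n)
  proj_d : ∀ n (i : Fin (n + 2)) (g : G (n + 1)),
    proj n (X.d n i g) = Y.d n i (proj (n + 1) g)
  proj_s : ∀ n (i : Fin (n + 1)) (g : G n),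
    proj (n + 1) (X.s n i g) = Y.s n i (proj n g)
  proj_act : ∀ n (g : G n), Y.act n (proj n g) = X.act n g

open CategoryTheory

variable {G N : ℕ → Type} [∀ n, Group (G n)] [∀ n, Group (N n)]

/-- The objects of the action groupoid `Γ_n = G_n ⫽ P_n`, identified with
`N_n ≅ G_n / P_n` via the structural projection. -/
def GammaObj (_P : CSGProjection G N) (n : ℕ) : Type := N n

/-- A morphism `[σ, f] : σ → σ · π(f)⁻¹` of the action groupoid `Γ_n`. -/
def GammaHom (P : CSGProjection G N) (n : ℕ) (a b : N n) : Type :=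
  { f : G n // a * (P.proj n f)⁻¹ = b }

instance (P : CSGProjection G N) (n : ℕ) : Groupoid (GammaObj P n) where
  Hom a b := GammaHom P n a b
  id a := ⟨1, by simp; exact @mul_one (N n) _ a⟩
  comp {a b c} f g := ⟨g.val * f.val, by
    rcases f with ⟨f, hf⟩; rcases g with ⟨g, hg⟩
    subst hf; subst hg
    simp [mul_inv_rev, mul_assoc]
    exact (@mul_assoc (N n) _ a _ _).symm⟩
  id_comp f := Subtype.ext (mul_one f.val)
  comp_id f := Subtype.ext (one_mul f.val)
  assoc f g h := Subtype.ext (mul_assoc h.val g.val f.val).symm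
  inv {a b} f := ⟨f.val⁻¹, by
    rcases f with ⟨f, hf⟩
    subst hf
    simp [mul_assoc]
    exact @inv_mul_cancel_right (N n) _ a _⟩
  inv_comp f := Subtype.ext (mul_inv_cancel f.val)
  comp_inv f := Subtype.ext (inv_mul_cancel f.val)

lemma s_one' (X : CrossedSimplicialGroup G) (n : ℕ) (i : Fin (n + 1)) : X.s n i 1 = 1 := by
  have h : X.s n i 1 = X.s n i 1 * X.s n i 1 := by
    have h0 := X.s_mul n i 1 1
    simpa [Equiv.Perm.one_def, Equiv.refl_symm, Equiv.refl_apply] using h0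
  exact left_eq_mul.mp h

lemma d_one' (X : CrossedSimplicialGroup G) (n : ℕ) (i : Fin (n + 2)) : X.d n i 1 = 1 := by
  have h : X.d n i 1 = X.d n i 1 * X.d n i 1 := by
    have h0 := X.d_mul n i 1 1
    simpa [Equiv.Perm.one_def, Equiv.refl_symm, Equiv.refl_apply] using h0
  exact left_eq_mul.mp h

lemma index_eq' (P : CSGProjection G N) (m : ℕ) (σ : N m) (f : G m) (i : Fin (m + 1)) :
    (P.X.act m f⁻¹).symm ((P.Y.act m σ).symm i)
      = (P.Y.act m (σ * (P.proj m f)⁻¹)).symm i := by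
  have h : P.Y.act m (σ * (P.proj m f)⁻¹) = P.Y.act m σ * (P.X.act m f)⁻¹ := by
    rw [map_mul, map_inv, P.proj_act]
  rw [h, map_inv]
  simp [← Equiv.Perm.inv_def, mul_inv_rev, Equiv.Perm.mul_apply]

/-- the formulas `s_i[σ, f] = [s_i(σ), (s_{σ⁻¹(i)}(f⁻¹))⁻¹]` and
`d_i[σ, f] = [d_i(σ), (d_{σ⁻¹(i)}(f⁻¹))⁻¹]` define functors of groupoids
`s_i : Γ_n → Γ_{n+1}` and `d_i : Γ_{n+1} → Γ_n`. -/
theorem gamma_face_degeneracy_functors (P : CSGProjection G N) (n : ℕ) :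
    (∀ i : Fin (n + 1), ∃ F : GammaObj P n ⥤ GammaObj P (n + 1),
      (∀ σ : GammaObj P n, F.obj σ = P.Y.s n i σ) ∧
      (∀ (σ τ : GammaObj P n) (f : σ ⟶ τ),
        (F.map f).val = (P.X.s n ((P.Y.act n σ).symm i) f.val⁻¹)⁻¹)) ∧
    (∀ j : Fin (n + 2), ∃ F : GammaObj P (n + 1) ⥤ GammaObj P n,
      (∀ σ : GammaObj P (n + 1), F.obj σ = P.Y.d n j σ) ∧
      (∀ (σ τ : GammaObj P (n + 1)) (f : σ ⟶ τ),
        (F.map f).val = (P.X.d n ((P.Y.act (n + 1) σ).symm j) f.val⁻¹)⁻¹)) := by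
  constructor
  · intro i
    refine ⟨{
      obj := fun σ => P.Y.s n i σ
      map := fun {σ τ} f => ⟨(P.X.s n ((P.Y.act n σ).symm i) f.val⁻¹)⁻¹, ?_⟩
      map_id := ?_
      map_comp := ?_ }, fun σ => rfl, fun σ τ f => rfl⟩
    · obtain ⟨f, rfl⟩ := f
      show P.Y.s n i σ * (P.proj (n + 1) ((P.X.s n ((P.Y.act n σ).symm i) f⁻¹)⁻¹))⁻¹
        = P.Y.s n i ((show N n from σ) * (P.proj n f)⁻¹)
      rw [map_inv, inv_inv, P.proj_s, map_inv, P.Y.s_mul n i (show N n from σ) (P.proj n f)⁻¹]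
    · intro σ
      apply Subtype.ext
      show (P.X.s n _ (1 : G n)⁻¹)⁻¹ = 1
      rw [inv_one, s_one', inv_one]
    · intro σ τ ρ f g
      apply Subtype.ext
      show (P.X.s n ((P.Y.act n σ).symm i) (g.val * f.val)⁻¹)⁻¹
        = (P.X.s n ((P.Y.act n τ).symm i) g.val⁻¹)⁻¹ * (P.X.s n ((P.Y.act n σ).symm i) f.val⁻¹)⁻¹
      rw [mul_inv_rev, P.X.s_mul, mul_inv_rev]
      congr 3
      obtain ⟨f, rfl⟩ := f
      exact index_eq' P n σ f i
  · intro j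
    refine ⟨{
      obj := fun σ => P.Y.d n j σ
      map := fun {σ τ} f => ⟨(P.X.d n ((P.Y.act (n + 1) σ).symm j) f.val⁻¹)⁻¹, ?_⟩
      map_id := ?_
      map_comp := ?_ }, fun σ => rfl, fun σ τ f => rfl⟩
    · obtain ⟨f, rfl⟩ := f
      show P.Y.d n j σ * (P.proj n ((P.X.d n ((P.Y.act (n + 1) σ).symm j) f⁻¹)⁻¹))⁻¹
        = P.Y.d n j ((show N (n + 1) from σ) * (P.proj (n + 1) f)⁻¹)
      rw [map_inv, inv_inv, P.proj_d, map_inv, P.Y.d_mul n j (show N (n + 1) from σ) (P.proj (n + 1) f)⁻¹]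
    · intro σ
      apply Subtype.ext
      show (P.X.d n _ (1 : G (n + 1))⁻¹)⁻¹ = 1
      rw [inv_one, d_one', inv_one]
    · intro σ τ ρ f g
      apply Subtype.ext
      show (P.X.d n ((P.Y.act (n + 1) σ).symm j) (g.val * f.val)⁻¹)⁻¹
        = (P.X.d n ((P.Y.act (n + 1) τ).symm j) g.val⁻¹)⁻¹
          * (P.X.d n ((P.Y.act (n + 1) σ).symm j) f.val⁻¹)⁻¹
      rw [mul_inv_rev, P.X.d_mul, mul_inv_rev]
      congr 3
      obtain ⟨f, rfl⟩ := f
      exact index_eq' P (n + 1) σ f j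

end CSGPaper
end

section
/- With G_*, P_*, N_* and Γ_n as above, the face and degeneracy functors on the groupoids Γ_* satisfy the simplicial identity d_i d_j = d_{j-1} d_i for i < j; concretely, for every [σ, f] ∈ Γ_n and i < j, d_{d_j(σ)⁻¹(i)}(d_{σ⁻¹(j)}(f)) = d_{d_i(σ)⁻¹(j-1)}(d_{σ⁻¹(i)}(f)). -/
/-!
Write `τ` for the permutation by which `σ` acts. Since the action is compatible with faces, both
sides delete from `f` the same two vertices `τ⁻¹ i` and `τ⁻¹ j`, in the two possible orders, the
second face index being the position the other vertex occupies after the first deletion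
(`succAbove_pface_symm_apply`). So the identity is the simplicial identity
`d_a d_b = d_{b-1} d_a` of `G`, applied in whichever order `τ⁻¹ i` and `τ⁻¹ j` come.
-/

open Equiv

namespace CSGPaper

lemma succAbove_pface_apply {a : ℕ} (j : Fin (a + 1)) (σ : Perm (Fin (a + 1))) (b : Fin a) :
    j.succAbove (pface j σ b) = σ ((σ.symm j).succAbove b) := by
  set e := (finSuccEquiv' (σ.symm j)).symm.trans (σ.trans (finSuccEquiv' j))
  have he : e (some b) ≠ none := by
    simp only [e, Equiv.trans_apply, finSuccEquiv'_symm_some, ne_eq, ← finSuccEquiv'_at j,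
      EmbeddingLike.apply_eq_iff_eq, ← σ.eq_symm_apply]
    exact (σ.symm j).succAbove_ne b
  have hsome : some (pface j σ b) = e (some b) :=
    Equiv.removeNone_some e (Option.ne_none_iff_exists'.mp he)
  rw [← finSuccEquiv'_symm_some, hsome]
  simp [e]

lemma succAbove_pface_symm_apply {a : ℕ} (j : Fin (a + 1)) (σ : Perm (Fin (a + 1)))
    (c : Fin a) : (σ.symm j).succAbove ((pface j σ).symm c) = σ.symm (j.succAbove c) := by
  rw [σ.eq_symm_apply, ← succAbove_pface_apply, Equiv.apply_symm_apply]

namespace CrossedSimplicialGroup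

variable {G : ℕ → Type} [∀ n, Group (G n)] (X : CrossedSimplicialGroup G) {n : ℕ}

lemma d_d_eq_of_succAbove_of_lt {p q : Fin (n + 3)} {a b : Fin (n + 2)}
    (ha : p.succAbove a = q) (hb : q.succAbove b = p) (hqp : q < p) (f : G (n + 2)) :
    X.d n a (X.d (n + 1) p f) = X.d n b (X.d (n + 1) q f) := by
  have hq : a.castSucc = q := by
    have hap : a.castSucc < p := (p.succAbove_lt_iff_castSucc_lt a).mp (by rw [ha]; exact hqp)
    rw [← ha, Fin.succAbove_of_castSucc_lt p a hap]
  have hqb : q ≤ b.castSucc := (q.lt_succAbove_iff_le_castSucc b).mp (by rw [hb]; exact hqp)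
  have hp : b.succ = p := by
    rw [← hb, Fin.succAbove_of_le_castSucc q b hqb]
  have hab : a ≤ b := Fin.castSucc_le_castSucc_iff.mp (hq ▸ hqb)
  subst hp hq
  exact X.dd n a b hab f

lemma d_d_eq_of_succAbove {p q : Fin (n + 3)} {a b : Fin (n + 2)}
    (ha : p.succAbove a = q) (hb : q.succAbove b = p) (f : G (n + 2)) :
    X.d n a (X.d (n + 1) p f) = X.d n b (X.d (n + 1) q f) := by
  rcases lt_or_gt_of_ne (ha ▸ p.succAbove_ne a : q ≠ p) with hqp | hpq
  · exact X.d_d_eq_of_succAbove_of_lt ha hb hqp f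
  · exact (X.d_d_eq_of_succAbove_of_lt hb ha hpq f).symm

end CrossedSimplicialGroup

/-- the simplicial identity `d_i d_j = d_{j-1} d_i` (for `i < j`) for
the face functors of the action groupoids `Γ_* = G_* ⫽ P_*`: on the morphism part,
for every `[σ, f]` with `σ ∈ N_n`, `f ∈ G_n`,
`d_{d_j(σ)⁻¹(i)}(d_{σ⁻¹(j)}(f)) = d_{d_i(σ)⁻¹(j-1)}(d_{σ⁻¹(i)}(f))`. -/
theorem gamma_dd (G N : ℕ → Type) [∀ n, Group (G n)] [∀ n, Group (N n)]
    (P : CSGProjection G N) (n : ℕ) (σ : N (n + 2)) (f : G (n + 2))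
    (i j : Fin (n + 3)) (hij : i < j) :
    P.X.d n ((P.Y.act (n + 1) (P.Y.d (n + 1) j σ)).symm
        ⟨i.val, by have h : i.val < j.val := hij; have := j.isLt; omega⟩)
      (P.X.d (n + 1) ((P.Y.act (n + 2) σ).symm j) f)
    = P.X.d n ((P.Y.act (n + 1) (P.Y.d (n + 1) i σ)).symm
        ⟨j.val - 1, by have := j.isLt; omega⟩)
      (P.X.d (n + 1) ((P.Y.act (n + 2) σ).symm i) f) := by
  rw [P.Y.act_d, P.Y.act_d]
  refine P.X.d_d_eq_of_succAbove ?_ ?_ f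
  · rw [succAbove_pface_symm_apply]
    exact congrArg _ (Fin.succAbove_castPred_of_lt j i hij)
  · rw [succAbove_pface_symm_apply]
    exact congrArg _ (Fin.succAbove_pred_of_lt i j hij)

end CSGPaper
end
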